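/- For any letters a, b, the operators satisfy ∂_a ∘ Θ_{b,a} - Θ_{b,a} ∘ ∂_a = ∂_b as linear operators on the span of words of length n+1. -/

import Mathlib

open Finsupp

variable {A : Type} [DecidableEq A]

/-- The formal sum of `Finsupp.single w 1` over a list of words. -/
noncomputable def wordSum (l : List (List A)) : List A →₀ ℂ :=
  (l.map fun w => Finsupp.single w (1 : ℂ)).sum

/-- All words obtained from `w` by inserting the letter `a` at one position. -/
def insertions (a : A) : List A → List (List A)
  | [] => [[a]]
  | b :: t => (a :: b :: t) :: (insertions a t).map (b :: ·)

/-- All words obtained from `w` by deleting one occurrence of the letter `a`. -/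
def deletions (a : A) : List A → List (List A)
  | [] => []
  | b :: t => (if b = a then [t] else []) ++ (deletions a t).map (b :: ·)

/-- All words obtained from `w` by replacing one occurrence of `b` by `a`. -/
def replacements (b a : A) : List A → List (List A)
  | [] => []
  | c :: t => (if c = b then [a :: t] else []) ++ (replacements b a t).map (c :: ·)

/-- The insertion operator `sh_a`. -/
noncomputable def shOp (a : A) : (List A →₀ ℂ) →ₗ[ℂ] (List A →₀ ℂ) :=
  Finsupp.linearCombination ℂ (fun w => wordSum (insertions a w))

/-- The deletion operator `∂_a`. -/
noncomputable def delOp (a : A) : (List A →₀ ℂ) →ₗ[ℂ] (List A →₀ ℂ) :=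
  Finsupp.linearCombination ℂ (fun w => wordSum (deletions a w))

/-- The replacement operator `Θ_{b,a}`. -/
noncomputable def repOp (b a : A) : (List A →₀ ℂ) →ₗ[ℂ] (List A →₀ ℂ) :=
  Finsupp.linearCombination ℂ (fun w => wordSum (replacements b a w))

/-- Remove the letter at position `i` of `w` and reinsert it at position `j` (0-based). -/
def moveCard (w : List A) (i j : ℕ) : List A :=
  match w[i]? with
  | Option.none => w
  | Option.some c => (w.eraseIdx i).insertIdx j c

/-- The random-to-random operator applied to a single word: the sum over all ordered
pairs of positions `(i, j)` of removing the letter at position `i` and reinserting it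
at position `j` (the diagonal `i = j` contributes `w.length • w`). -/
noncomputable def r2rWord (w : List A) : List A →₀ ℂ :=
  ∑ i ∈ Finset.range w.length, ∑ j ∈ Finset.range w.length,
    Finsupp.single (moveCard w i j) (1 : ℂ)

/-- The (unnormalized) random-to-random operator `R2R`. -/
noncomputable def r2rOp : (List A →₀ ℂ) →ₗ[ℂ] (List A →₀ ℂ) :=
  Finsupp.linearCombination ℂ r2rWord

/-- Random-to-top on a single word: move the letter at each position to the end. -/
noncomputable def r2tWord (w : List A) : List A →₀ ℂ :=
  ∑ i ∈ Finset.range w.length, Finsupp.single (moveCard w i (w.length - 1)) (1 : ℂ)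

/-- The (unnormalized) random-to-top operator `R2T`. -/
noncomputable def r2tOp : (List A →₀ ℂ) →ₗ[ℂ] (List A →₀ ℂ) :=
  Finsupp.linearCombination ℂ r2tWord

/-- Top-to-random on a single word: move the last letter to each position. -/
noncomputable def t2rWord (w : List A) : List A →₀ ℂ :=
  ∑ j ∈ Finset.range w.length, Finsupp.single (moveCard w (w.length - 1) j) (1 : ℂ)

/-- The (unnormalized) top-to-random operator `T2R`. -/
noncomputable def t2rOp : (List A →₀ ℂ) →ₗ[ℂ] (List A →₀ ℂ) :=
  Finsupp.linearCombination ℂ t2rWord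

/-! Prepending a letter `c` obeys Leibniz-type rules:
`∂_a (c x) = [c = a] x + c ∂_a x` and `Θ_{b,a} (c x) = [c = b] a x + c Θ_{b,a} x`.
Expanding `∂_a Θ_{b,a} (c x)` with them, the only term not matched in `Θ_{b,a} ∂_a (c x)`
up to the induction hypothesis on `x` is `[c = b] x`, which is the contribution of the first
letter to `∂_b (c x)`. -/

lemma wordSum_append {α : Type} (l₁ l₂ : List (List α)) :
    wordSum (l₁ ++ l₂) = wordSum l₁ + wordSum l₂ := by
  simp [wordSum]

lemma mapDomain_wordSum {α : Type} (f : List α → List α) (l : List (List α)) :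
    mapDomain f (wordSum l) = wordSum (l.map f) := by
  induction l with
  | nil => simp [wordSum]
  | cons w l ih => simpa [wordSum, mapDomain_add] using ih

lemma wordSum_ite {α : Type} (p : Prop) [Decidable p] (w : List α) :
    wordSum (if p then [w] else []) = if p then single w 1 else 0 := by
  split_ifs <;> simp [wordSum]

lemma delOp_mapDomain_cons (a c : A) (x : List A →₀ ℂ) :
    delOp a (mapDomain (List.cons c) x) =
      (if c = a then x else 0) + mapDomain (List.cons c) (delOp a x) := by
  induction x using Finsupp.induction_linear with
  | zero => simp
  | add x y hx hy =>
    simp only [mapDomain_add, map_add, hx, hy]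
    split_ifs <;> abel
  | single t r =>
    simp only [delOp, mapDomain_single, linearCombination_single, deletions, wordSum_append,
      wordSum_ite, mapDomain_wordSum, smul_add, mapDomain_smul]
    split_ifs <;> simp [smul_single]

lemma repOp_mapDomain_cons (b a c : A) (x : List A →₀ ℂ) :
    repOp b a (mapDomain (List.cons c) x) =
      (if c = b then mapDomain (List.cons a) x else 0) + mapDomain (List.cons c) (repOp b a x) := by
  induction x using Finsupp.induction_linear with
  | zero => simp
  | add x y hx hy =>
    simp only [mapDomain_add, map_add, hx, hy]
    split_ifs <;> abel
  | single t r =>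
    simp only [repOp, mapDomain_single, linearCombination_single, replacements, wordSum_append,
      wordSum_ite, mapDomain_wordSum, smul_add, mapDomain_smul]
    split_ifs <;> simp [smul_single]

lemma delOp_repOp_single (a b : A) (w : List A) :
    delOp a (repOp b a (single w 1)) =
      repOp b a (delOp a (single w 1)) + delOp b (single w 1) := by
  induction w with
  | nil => simp [delOp, repOp, deletions, replacements, wordSum]
  | cons c t ih =>
    rw [← mapDomain_single (f := List.cons c)]
    simp only [repOp_mapDomain_cons, delOp_mapDomain_cons, map_add, mapDomain_add, ih]
    split_ifs <;> simp only [delOp_mapDomain_cons, if_pos, map_zero, zero_add] <;> abel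

theorem delOp_comp_repOp_sub_repOp_comp_delOp (a b : A) :
    delOp a ∘ₗ repOp b a - repOp b a ∘ₗ delOp a = delOp b :=
  lhom_ext' fun w => LinearMap.ext_ring <| by simp [delOp_repOp_single]

theorem del_comp_rep_sub_rep_comp_del_general (a b : A) (w : List A) :
    delOp a (repOp b a (Finsupp.single w (1 : ℂ))) -
      repOp b a (delOp a (Finsupp.single w (1 : ℂ))) =
    delOp b (Finsupp.single w (1 : ℂ)) :=
  LinearMap.congr_fun (delOp_comp_repOp_sub_repOp_comp_delOp a b) (single w 1)

/-- **Lemma 36, Equation (15).** On words of length `n + 1`,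
`∂_a ∘ Θ_{b,a} - Θ_{b,a} ∘ ∂_a = ∂_b`. -/
theorem del_comp_rep_sub_rep_comp_del (a b : A) (n : ℕ) (w : List A)
    (hw : w.length = n + 1) :
    delOp a (repOp b a (Finsupp.single w (1 : ℂ))) -
      repOp b a (delOp a (Finsupp.single w (1 : ℂ))) =
    delOp b (Finsupp.single w (1 : ℂ)) :=
  del_comp_rep_sub_rep_comp_del_general a b w
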